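/- arXiv:1810.02737 — 3 statements merged into one kernel-verified Lean document; each statement's English description precedes it below -/
import Mathlib

section
/- Let G and H be disjoint graphs and u ∈ V(G). Then γ_gr(G with u replaced by H) = max{γ_gr(G), γ_gr^u(G) + γ_gr(H) − 1}, where γ_gr^u(G) = max{γ_gr(G, I) : I independent set of G containing u}. -/
/-!
Legality of a sequence (each vertex has a private neighbour with respect to its predecessors) is
inherited by subsequences, and every legal sequence extends greedily to a legal dominating one, so
all three invariants can be compared through legal sequences that need not dominate.

Replacing `u` in a legal sequence of `G` by a legal sequence of `H` gives a legal sequence of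
`G_{u ↩ H}`, provided the replacement has length one or `u` footprints itself; this gives both lower
bounds. Conversely, split a legal sequence `T` of `G_{u ↩ H}` at its first vertex `w₁` from `H`.
If the vertices before `w₁` already dominate `u` in `G`, no further vertex of `H` can follow and
`w₁ ↦ u` turns `T` into a legal sequence of `G`. Otherwise `u` footprints itself after the same
substitution, the `H`-vertices of `T` form a legal sequence of `H`, and at most one later vertex
of `G - u` (one whose private neighbours all lie in the copy of `H`) has to be moved from the
`G`-side to the `H`-side, where its private neighbour extends the sequence of `H`.
-/

namespace GrundyDom

/-- Closed neighborhood N[v]. -/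
def cn {V : Type*} (G : SimpleGraph V) (v : V) : Set V := insert v (G.neighborSet v)

/-- Union of closed neighborhoods of the vertices of a list. -/
def cnUnion {V : Type*} (G : SimpleGraph V) (L : List V) : Set V := ⋃ v ∈ L, cn G v

/-- Private neighborhood of `v` with respect to the first `i` entries of `S`:
`N[v] \ (N[v_1] ∪ ... ∪ N[v_i])`. -/
def PN {V : Type*} (G : SimpleGraph V) (S : List V) (i : ℕ) (v : V) : Set V :=
  cn G v \ cnUnion G (S.take i)

/-- A legal dominating sequence: distinct vertices, dominating set, and every
vertex of the sequence has a nonempty private neighborhood w.r.t. its predecessors. -/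
structure IsLegal {V : Type*} (G : SimpleGraph V) (S : List V) : Prop where
  nodup : S.Nodup
  dominates : ∀ v : V, ∃ u ∈ S, v ∈ cn G u
  legal : ∀ i : Fin S.length, (PN G S i.val (S.get i)).Nonempty

/-- The set `I_S` of vertices that footprint themselves in `S`. -/
def selfFoot {V : Type*} (G : SimpleGraph V) (S : List V) : Set V :=
  {v | ∃ i : Fin S.length, S.get i = v ∧ v ∈ PN G S i.val v}

/-- Grundy domination number: maximum length of a legal dominating sequence. -/
noncomputable def gammaGr {V : Type*} (G : SimpleGraph V) : ℕ :=
  sSup {k | ∃ S : List V, IsLegal G S ∧ S.length = k}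

/-- `γ_gr(G, I)`: maximum length of a legal dominating sequence `S` with `I_S = I`. -/
noncomputable def gammaGrOn {V : Type*} (G : SimpleGraph V) (I : Set V) : ℕ :=
  sSup {k | ∃ S : List V, IsLegal G S ∧ selfFoot G S = I ∧ S.length = k}

/-- `γ_gr^u(G)`: maximum of `γ_gr(G, I)` over independent sets `I` containing `u`. -/
noncomputable def gammaGrVert {V : Type*} (G : SimpleGraph V) (u : V) : ℕ :=
  sSup {k | ∃ I : Set V, (∀ ⦃a⦄, a ∈ I → ∀ ⦃b⦄, b ∈ I → a ≠ b → ¬ G.Adj a b) ∧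
    u ∈ I ∧ k = gammaGrOn G I}

/-- Independent set of a graph. -/
def IsIndep {V : Type*} (G : SimpleGraph V) (I : Set V) : Prop :=
  ∀ ⦃u⦄, u ∈ I → ∀ ⦃v⦄, v ∈ I → u ≠ v → ¬ G.Adj u v

/-- The X-join product `G ↩ 𝓡`: replace each vertex `v` of `G` by the graph `R v`. -/
def XJoin {V : Type*} (G : SimpleGraph V) {W : V → Type*} (R : ∀ v, SimpleGraph (W v)) :
    SimpleGraph (Σ v, W v) where
  Adj x y := G.Adj x.1 y.1 ∨ ∃ h : x.1 = y.1, (R y.1).Adj (h ▸ x.2) y.2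
  symm := ⟨by
    rintro ⟨a, xa⟩ ⟨b, yb⟩ (h | ⟨h, hadj⟩)
    · exact Or.inl h.symm
    · dsimp at h hadj
      subst h
      exact Or.inr ⟨rfl, hadj.symm⟩⟩
  loopless := ⟨by
    rintro ⟨a, xa⟩ (h | ⟨h, hadj⟩)
    · exact G.irrefl h
    · exact (R a).irrefl hadj⟩

/-- The lexicographic product `G ∘ H`. -/
def Lex {V W : Type*} (G : SimpleGraph V) (H : SimpleGraph W) : SimpleGraph (V × W) where
  Adj x y := G.Adj x.1 y.1 ∨ (x.1 = y.1 ∧ H.Adj x.2 y.2)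
  symm := ⟨by
    rintro x y (h | ⟨h1, h2⟩)
    · exact Or.inl h.symm
    · exact Or.inr ⟨h1.symm, h2.symm⟩⟩
  loopless := ⟨by
    rintro x (h | ⟨_, h⟩)
    · exact G.irrefl h
    · exact H.irrefl h⟩

/-- The replacement graph `G_{u ↩ H}`: replace the vertex `u` of `G` by `H`. -/
def Replace {V : Type*} (G : SimpleGraph V) (u : V) {W : Type*} (H : SimpleGraph W) :
    SimpleGraph ({v : V // v ≠ u} ⊕ W) where
  Adj x y :=
    match x, y with
    | Sum.inl a, Sum.inl b => G.Adj a.1 b.1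
    | Sum.inl a, Sum.inr _ => G.Adj a.1 u
    | Sum.inr _, Sum.inl b => G.Adj u b.1
    | Sum.inr h1, Sum.inr h2 => H.Adj h1 h2
  symm := ⟨by rintro (a|a) (b|b) h <;> exact h.symm⟩
  loopless := ⟨by rintro (a|a) h <;> exact h.ne rfl⟩

/-- `C_n^m`: the m-th power of the n-cycle, on vertex set `ZMod n`;
two vertices are adjacent iff their circular distance is between 1 and m. -/
def cyclePow (n m : ℕ) : SimpleGraph (ZMod n) where
  Adj i j := i ≠ j ∧ ∃ k : ℕ, 1 ≤ k ∧ k ≤ m ∧ (j = i + k ∨ i = j + k)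
  symm := ⟨by
    rintro i j ⟨hne, k, h1, h2, h3⟩
    exact ⟨hne.symm, k, h1, h2, h3.symm⟩⟩
  loopless := ⟨fun i h => h.1 rfl⟩

/-- `P_n^m`: the m-th power of the n-path, on vertex set `Fin n`
(vertex `i` represents the `(i+1)`-st vertex of the path);
two vertices adjacent iff their distance is between 1 and m. -/
def pathPow (n m : ℕ) : SimpleGraph (Fin n) where
  Adj i j := i ≠ j ∧ Nat.dist i.val j.val ≤ m
  symm := ⟨by
    rintro i j ⟨hne, hd⟩
    exact ⟨hne.symm, by rwa [Nat.dist_comm]⟩⟩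
  loopless := ⟨fun i h => h.1 rfl⟩

end GrundyDom

open GrundyDom Finset

namespace GrundyDom

lemma mem_or_mem_of_append_cons_eq {α : Type*} {L R L' R' : List α} {a b : α}
    (h : L ++ a :: R = L' ++ b :: R') (hab : a ≠ b) : a ∈ L' ∨ b ∈ L := by
  rcases List.append_eq_append_iff.1 h with ⟨M, rfl, hM⟩ | ⟨M, rfl, hM⟩
  · cases M with
    | nil => exact absurd (List.cons_eq_cons.1 hM).1 hab
    | cons c M => exact Or.inl (by simp [(List.cons_eq_cons.1 hM).1])
  · cases M with
    | nil => exact absurd (List.cons_eq_cons.1 hM).1.symm hab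
    | cons c M => exact Or.inr (by simp [(List.cons_eq_cons.1 hM).1])

lemma exists_append_cons_of_sublist {α : Type*} {S L' R' : List α} {v : α}
    (h : (L' ++ v :: R').Sublist S) :
    ∃ L R, S = L ++ v :: R ∧ L'.Sublist L := by
  obtain ⟨r₁, r₂, rfl, hL', hr₂⟩ := List.append_sublist_iff.1 h
  obtain ⟨s₁, s₂, rfl, hv, -⟩ := List.cons_sublist_iff.1 hr₂
  obtain ⟨a, b, rfl⟩ := List.append_of_mem hv
  exact ⟨r₁ ++ a, b ++ s₂, by simp, hL'.trans (List.sublist_append_left _ _)⟩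

lemma exists_map_val_eq_of_nodup {V : Type*} {L R : List V} {u : V} (h : (L ++ u :: R).Nodup) :
    ∃ L' R' : List {v : V // v ≠ u}, L'.map Subtype.val = L ∧ R'.map Subtype.val = R := by
  have hu := (List.nodup_cons.1 (List.nodup_middle.1 h)).1
  lift L to List {v : V // v ≠ u} using fun v hv hvu ↦ hu (by simp [← hvu, hv])
  lift R to List {v : V // v ≠ u} using fun v hv hvu ↦ hu (by simp [← hvu, hv])
  exact ⟨L, R, rfl, rfl⟩

section Legal

variable {V : Type*} {G : SimpleGraph V}

lemma mem_cn {x v : V} : x ∈ cn G v ↔ x = v ∨ G.Adj v x := by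
  simp [cn]

lemma self_mem_cn (v : V) : v ∈ cn G v := by simp [cn]

lemma mem_cnUnion {x : V} {L : List V} : x ∈ cnUnion G L ↔ ∃ v ∈ L, x ∈ cn G v := by
  simp [cnUnion]

lemma cnUnion_mono {L L' : List V} (h : L ⊆ L') : cnUnion G L ⊆ cnUnion G L' :=
  fun _ hx ↦ by
    obtain ⟨v, hv, hxv⟩ := mem_cnUnion.1 hx
    exact mem_cnUnion.2 ⟨v, h hv, hxv⟩

@[simp] lemma cnUnion_nil : cnUnion G ([] : List V) = ∅ := by
  ext; simp [mem_cnUnion]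

@[simp] lemma cnUnion_append (L L' : List V) :
    cnUnion G (L ++ L') = cnUnion G L ∪ cnUnion G L' := by
  ext; simp [mem_cnUnion, or_and_right, exists_or]

@[simp] lemma cnUnion_cons (v : V) (L : List V) : cnUnion G (v :: L) = cn G v ∪ cnUnion G L := by
  ext; simp [mem_cnUnion]

def IsLegalSeq (G : SimpleGraph V) (S : List V) : Prop :=
  ∀ L v R, S = L ++ v :: R → (cn G v \ cnUnion G L).Nonempty

lemma isLegalSeq_nil : IsLegalSeq G [] := by
  simp [IsLegalSeq]

lemma isLegalSeq_singleton (v : V) : IsLegalSeq G [v] := by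
  rintro (_ | ⟨_, _⟩) w R h
  · exact ⟨w, self_mem_cn w, by simp⟩
  · simp at h

lemma isLegalSeq_iff_forall_PN {S : List V} :
    IsLegalSeq G S ↔ ∀ i : Fin S.length, (PN G S i (S.get i)).Nonempty := by
  constructor
  · intro h i
    have hS : S = S.take i ++ S.get i :: S.drop (i + 1) := by simp
    exact h _ _ _ hS
  · rintro h L v R rfl
    simpa [PN, List.take_left'] using h ⟨L.length, by simp⟩

lemma isLegal_iff {S : List V} :
    IsLegal G S ↔ IsLegalSeq G S ∧ S.Nodup ∧ ∀ v, ∃ s ∈ S, v ∈ cn G s :=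
  ⟨fun h ↦ ⟨isLegalSeq_iff_forall_PN.2 h.legal, h.nodup, h.dominates⟩,
    fun ⟨h, hnd, hdom⟩ ↦ ⟨hnd, hdom, isLegalSeq_iff_forall_PN.1 h⟩⟩

lemma IsLegalSeq.sublist {S S' : List V} (hS : IsLegalSeq G S) (h : S'.Sublist S) :
    IsLegalSeq G S' := by
  rintro L' v R' rfl
  obtain ⟨L, R, hLR, hL'⟩ := exists_append_cons_of_sublist h
  obtain ⟨x, hxv, hxL⟩ := hS L v R hLR
  exact ⟨x, hxv, fun hx ↦ hxL (cnUnion_mono hL'.subset hx)⟩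

lemma IsLegalSeq.nodup {S : List V} (hS : IsLegalSeq G S) : S.Nodup := by
  refine List.nodup_iff_sublist.2 fun a ha ↦ ?_
  obtain ⟨x, hx, hxa⟩ := hS.sublist ha [a] a [] rfl
  exact hxa (by simpa using hx)

lemma isLegalSeq_append {A B : List V} :
    IsLegalSeq G (A ++ B) ↔ IsLegalSeq G A ∧
      ∀ L v R, B = L ++ v :: R → (cn G v \ cnUnion G (A ++ L)).Nonempty := by
  refine ⟨fun h ↦ ⟨h.sublist (List.sublist_append_left _ _), fun L v R hB ↦ h _ v R (by simp [hB])⟩,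
    fun ⟨hA, hB⟩ L v R hS ↦ ?_⟩
  rcases List.append_eq_append_iff.1 hS with ⟨M, rfl, hM⟩ | ⟨M, rfl, hM⟩
  · exact hB M v R hM
  · cases M with
    | nil => simpa using hB [] v R (by simpa using hM.symm)
    | cons w M =>
      obtain ⟨rfl, rfl⟩ := List.cons_eq_cons.1 hM
      exact hA L v M rfl

lemma IsLegalSeq.append_singleton {S : List V} {v : V} (hS : IsLegalSeq G S)
    (hv : v ∉ cnUnion G S) : IsLegalSeq G (S ++ [v]) := by
  refine isLegalSeq_append.2 ⟨hS, fun L w R h ↦ ?_⟩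
  obtain ⟨rfl, rfl, rfl⟩ : L = [] ∧ w = v ∧ R = [] := by
    cases L <;> simp_all [eq_comm]
  exact ⟨w, self_mem_cn w, by simpa using hv⟩

lemma IsLegalSeq.exists_isLegal_append [Finite V] {S : List V} (hS : IsLegalSeq G S) :
    ∃ T, IsLegal G (S ++ T) := by
  have := Fintype.ofFinite V
  induction hn : Fintype.card V - S.length using Nat.strong_induction_on generalizing S with
  | _ n ih =>
    by_cases hdom : ∀ v, ∃ s ∈ S, v ∈ cn G s
    · exact ⟨[], by simpa using isLegal_iff.2 ⟨hS, hS.nodup, hdom⟩⟩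
    · push Not at hdom
      obtain ⟨v, hv⟩ := hdom
      have hS' := hS.append_singleton (v := v) (by simpa [mem_cnUnion] using hv)
      have := hS'.nodup.length_le_card
      obtain ⟨T, hT⟩ := ih _ (by simp at this ⊢; omega) hS' rfl
      exact ⟨v :: T, by simpa using hT⟩

lemma mem_selfFoot_iff {S : List V} {v : V} :
    v ∈ selfFoot G S ↔ ∃ L R, S = L ++ v :: R ∧ v ∉ cnUnion G L := by
  constructor
  · rintro ⟨i, rfl, -, hi⟩
    exact ⟨S.take i, S.drop (i + 1), by simp, hi⟩
  · rintro ⟨L, R, rfl, hv⟩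
    exact ⟨⟨L.length, by simp⟩, by simp, by simp [PN, hv, self_mem_cn]⟩

lemma isIndep_selfFoot (S : List V) : IsIndep G (selfFoot G S) := by
  intro a ha b hb hab hadj
  obtain ⟨L, R, rfl, haL⟩ := mem_selfFoot_iff.1 ha
  obtain ⟨L', R', hS, hbL'⟩ := mem_selfFoot_iff.1 hb
  rcases mem_or_mem_of_append_cons_eq hS hab with h | h
  · exact hbL' (mem_cnUnion.2 ⟨a, h, mem_cn.2 (Or.inr hadj)⟩)
  · exact haL (mem_cnUnion.2 ⟨b, h, mem_cn.2 (Or.inr hadj.symm)⟩)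

end Legal

section Bounds

variable {V : Type*} [Finite V] {G : SimpleGraph V}

lemma IsLegalSeq.length_le_card {S : List V} (h : IsLegalSeq G S) : S.length ≤ Nat.card V := by
  have := Fintype.ofFinite V
  simpa [Nat.card_eq_fintype_card] using h.nodup.length_le_card

lemma bddAbove_lengths_isLegal :
    BddAbove {k | ∃ S : List V, IsLegal G S ∧ S.length = k} :=
  ⟨Nat.card V, by rintro _ ⟨S, hS, rfl⟩; exact (isLegal_iff.1 hS).1.length_le_card⟩

lemma bddAbove_lengths_isLegal_selfFoot_eq (I : Set V) :
    BddAbove {k | ∃ S : List V, IsLegal G S ∧ selfFoot G S = I ∧ S.length = k} :=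
  ⟨Nat.card V, by rintro _ ⟨S, hS, -, rfl⟩; exact (isLegal_iff.1 hS).1.length_le_card⟩

lemma IsLegal.length_le_gammaGr {S : List V} (h : IsLegal G S) : S.length ≤ gammaGr G :=
  le_csSup bddAbove_lengths_isLegal ⟨S, h, rfl⟩

lemma IsLegalSeq.length_le_gammaGr {S : List V} (h : IsLegalSeq G S) : S.length ≤ gammaGr G := by
  obtain ⟨T, hT⟩ := h.exists_isLegal_append
  have := hT.length_le_gammaGr
  simp at this
  omega

lemma exists_isLegal_length_eq_gammaGr : ∃ S, IsLegal G S ∧ S.length = gammaGr G := by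
  obtain ⟨S, hS⟩ := (isLegalSeq_nil (G := G)).exists_isLegal_append
  exact Nat.sSup_mem (s := {k | ∃ S : List V, IsLegal G S ∧ S.length = k})
    ⟨_, S, by simpa using hS, rfl⟩ bddAbove_lengths_isLegal

lemma bddAbove_gammaGrOn_indep (u : V) :
    BddAbove {k | ∃ I : Set V, (∀ ⦃a⦄, a ∈ I → ∀ ⦃b⦄, b ∈ I → a ≠ b → ¬ G.Adj a b) ∧
      u ∈ I ∧ k = gammaGrOn G I} :=
  ⟨Nat.card V, by
    rintro _ ⟨I, -, -, rfl⟩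
    exact csSup_le' fun _ ⟨S, hS, _, hk⟩ ↦ hk ▸ (isLegal_iff.1 hS).1.length_le_card⟩

lemma IsLegal.length_le_gammaGrVert {S : List V} {u : V} (h : IsLegal G S)
    (hu : u ∈ selfFoot G S) : S.length ≤ gammaGrVert G u :=
  (le_csSup (bddAbove_lengths_isLegal_selfFoot_eq _) ⟨S, h, rfl, rfl⟩).trans
    (le_csSup (bddAbove_gammaGrOn_indep u) ⟨_, isIndep_selfFoot S, hu, rfl⟩)

lemma IsLegalSeq.length_le_gammaGrVert {L R : List V} {u : V} (h : IsLegalSeq G (L ++ u :: R))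
    (hu : u ∉ cnUnion G L) : (L ++ u :: R).length ≤ gammaGrVert G u := by
  obtain ⟨T, hT⟩ := h.exists_isLegal_append
  have := hT.length_le_gammaGrVert (mem_selfFoot_iff.2 ⟨L, R ++ T, by simp, hu⟩)
  simp at this ⊢
  omega

lemma exists_isLegal_gammaGrVert_le (u : V) :
    ∃ S, IsLegal G S ∧ u ∈ selfFoot G S ∧ gammaGrVert G u ≤ S.length := by
  obtain ⟨T, hT⟩ := (isLegalSeq_singleton (G := G) u).exists_isLegal_append
  have huT : u ∈ selfFoot G ([u] ++ T) := mem_selfFoot_iff.2 ⟨[], T, rfl, by simp⟩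
  have hmem : gammaGrVert G u ∈ {k | ∃ I : Set V,
      (∀ ⦃a⦄, a ∈ I → ∀ ⦃b⦄, b ∈ I → a ≠ b → ¬ G.Adj a b) ∧ u ∈ I ∧ k = gammaGrOn G I} :=
    Nat.sSup_mem ⟨_, _, isIndep_selfFoot _, huT, rfl⟩ (bddAbove_gammaGrOn_indep u)
  obtain ⟨I, -, huI, hI⟩ := hmem
  have hpos : 0 < gammaGrOn G I := hI ▸ (hT.length_le_gammaGrVert huT).trans_lt' (by simp)
  have hne : {k | ∃ S : List V, IsLegal G S ∧ selfFoot G S = I ∧ S.length = k}.Nonempty := by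
    by_contra h
    simp [gammaGrOn, Set.not_nonempty_iff_eq_empty.1 h] at hpos
  obtain ⟨S, hS, rfl, hSI⟩ : gammaGrOn G I ∈ _ :=
    Nat.sSup_mem hne (bddAbove_lengths_isLegal_selfFoot_eq I)
  exact ⟨S, hS, huI, (hI.trans hSI.symm).le⟩

end Bounds

section Replace

variable {V W : Type*} {G : SimpleGraph V} {u : V} {H : SimpleGraph W}

@[simp] lemma inl_mem_cn_inl {x c : {v : V // v ≠ u}} :
    (Sum.inl x : {v : V // v ≠ u} ⊕ W) ∈ cn (Replace G u H) (Sum.inl c) ↔ x.1 ∈ cn G c.1 := by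
  simp [mem_cn, Replace, Subtype.ext_iff]

@[simp] lemma inr_mem_cn_inl {w : W} {c : {v : V // v ≠ u}} :
    Sum.inr w ∈ cn (Replace G u H) (Sum.inl c) ↔ u ∈ cn G c.1 := by
  simp [mem_cn, Replace, c.2.symm]

@[simp] lemma inl_mem_cn_inr {x : {v : V // v ≠ u}} {w : W} :
    Sum.inl x ∈ cn (Replace G u H) (Sum.inr w) ↔ x.1 ∈ cn G u := by
  simp [mem_cn, Replace, x.2]

@[simp] lemma inr_mem_cn_inr {w' w : W} :
    (Sum.inr w' : {v : V // v ≠ u} ⊕ W) ∈ cn (Replace G u H) (Sum.inr w) ↔ w' ∈ cn H w := by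
  simp [mem_cn, Replace]

def projV (T : List ({v : V // v ≠ u} ⊕ W)) : List V :=
  (T.filterMap Sum.getLeft?).map Subtype.val

def projW (T : List ({v : V // v ≠ u} ⊕ W)) : List W :=
  T.filterMap Sum.getRight?

@[simp] lemma projV_nil : projV ([] : List ({v : V // v ≠ u} ⊕ W)) = [] := rfl

@[simp] lemma projV_cons_inl (a : {v : V // v ≠ u}) (T : List ({v : V // v ≠ u} ⊕ W)) :
    projV (Sum.inl a :: T) = a.1 :: projV T := rfl

@[simp] lemma projV_cons_inr (w : W) (T : List ({v : V // v ≠ u} ⊕ W)) :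
    projV (Sum.inr w :: T) = projV T := rfl

@[simp] lemma projV_append (T T' : List ({v : V // v ≠ u} ⊕ W)) :
    projV (T ++ T') = projV T ++ projV T' := by
  simp [projV]

@[simp] lemma projW_nil : projW ([] : List ({v : V // v ≠ u} ⊕ W)) = [] := rfl

@[simp] lemma projW_cons_inl (a : {v : V // v ≠ u}) (T : List ({v : V // v ≠ u} ⊕ W)) :
    projW (Sum.inl a :: T) = projW T := rfl

@[simp] lemma projW_cons_inr (w : W) (T : List ({v : V // v ≠ u} ⊕ W)) :
    projW (Sum.inr w :: T) = w :: projW T := rfl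

@[simp] lemma projW_append (T T' : List ({v : V // v ≠ u} ⊕ W)) :
    projW (T ++ T') = projW T ++ projW T' := by
  simp [projW]

@[simp] lemma projV_map_inl (L : List {v : V // v ≠ u}) :
    projV (L.map Sum.inl : List (_ ⊕ W)) = L.map Subtype.val := by
  induction L <;> simp_all

@[simp] lemma projW_map_inl (L : List {v : V // v ≠ u}) :
    projW (L.map Sum.inl : List (_ ⊕ W)) = [] := by
  induction L <;> simp_all

@[simp] lemma projV_map_inr (M : List W) :
    projV (M.map Sum.inr : List ({v : V // v ≠ u} ⊕ W)) = [] := by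
  induction M <;> simp_all

@[simp] lemma projW_map_inr (M : List W) :
    projW (M.map Sum.inr : List ({v : V // v ≠ u} ⊕ W)) = M := by
  induction M <;> simp_all

lemma length_projV_add_length_projW (T : List ({v : V // v ≠ u} ⊕ W)) :
    (projV T).length + (projW T).length = T.length := by
  induction T with
  | nil => rfl
  | cons t T ih => cases t <;> simp <;> omega

lemma projV_sublist_projV {X X' : List ({v : V // v ≠ u} ⊕ W)} (h : X'.Sublist X) :
    (projV X').Sublist (projV X) :=
  (h.filterMap _).map _

lemma val_mem_projV {T : List ({v : V // v ≠ u} ⊕ W)} {a : {v : V // v ≠ u}} (h : Sum.inl a ∈ T) :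
    a.1 ∈ projV T := by
  simp only [projV, List.mem_map, List.mem_filterMap]
  exact ⟨a, ⟨_, h, rfl⟩, rfl⟩

lemma inl_mem_cnUnion {x : {v : V // v ≠ u}} {T : List ({v : V // v ≠ u} ⊕ W)} :
    Sum.inl x ∈ cnUnion (Replace G u H) T ↔
      x.1 ∈ cnUnion G (projV T) ∨ (projW T ≠ [] ∧ x.1 ∈ cn G u) := by
  induction T with
  | nil => simp
  | cons t T ih => cases t <;> simp [ih] <;> tauto

lemma inr_mem_cnUnion {w : W} {T : List ({v : V // v ≠ u} ⊕ W)} :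
    Sum.inr w ∈ cnUnion (Replace G u H) T ↔
      u ∈ cnUnion G (projV T) ∨ w ∈ cnUnion H (projW T) := by
  induction T with
  | nil => simp
  | cons t T ih => cases t <;> simp [ih] <;> tauto

lemma exists_eq_append_inl_of_projV_eq {T : List ({v : V // v ≠ u} ⊕ W)} {L M : List V} {c : V}
    (h : projV T = L ++ c :: M) :
    ∃ X a Y, T = X ++ Sum.inl a :: Y ∧ projV X = L ∧ a.1 = c := by
  induction T generalizing L with
  | nil => simp at h
  | cons t T ih =>
    rcases t with a | w
    · cases L with
      | nil => exact ⟨[], a, T, rfl, rfl, (List.cons_eq_cons.1 h).1⟩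
      | cons b L =>
        simp only [projV_cons_inl, List.cons_append, List.cons.injEq] at h
        obtain ⟨rfl, h⟩ := h
        obtain ⟨X, a', Y, rfl, rfl, rfl⟩ := ih h
        exact ⟨Sum.inl a :: X, a', Y, rfl, rfl, rfl⟩
    · obtain ⟨X, a', Y, rfl, rfl, rfl⟩ := ih h
      exact ⟨Sum.inr w :: X, a', Y, rfl, rfl, rfl⟩

lemma exists_eq_append_inr_of_projW_eq {T : List ({v : V // v ≠ u} ⊕ W)} {L M : List W} {w : W}
    (h : projW T = L ++ w :: M) : ∃ X Y, T = X ++ Sum.inr w :: Y ∧ projW X = L := by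
  induction T generalizing L with
  | nil => simp at h
  | cons t T ih =>
    rcases t with a | w'
    · obtain ⟨X, Y, rfl, rfl⟩ := ih h
      exact ⟨Sum.inl a :: X, Y, rfl, rfl⟩
    · cases L with
      | nil => exact ⟨[], T, by simp [(List.cons_eq_cons.1 h).1], rfl⟩
      | cons b L =>
        simp only [projW_cons_inr, List.cons_append, List.cons.injEq] at h
        obtain ⟨rfl, h⟩ := h
        obtain ⟨X, Y, rfl, rfl⟩ := ih h
        exact ⟨Sum.inr w' :: X, Y, rfl, rfl⟩

lemma isLegalSeq_projV {T : List ({v : V // v ≠ u} ⊕ W)} (hT : IsLegalSeq (Replace G u H) T) :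
    IsLegalSeq G (projV T) := by
  intro L c M h
  obtain ⟨X, a, Y, rfl, rfl, rfl⟩ := exists_eq_append_inl_of_projV_eq h
  obtain ⟨y | w, hy, hyX⟩ := hT X _ Y rfl
  · exact ⟨y.1, inl_mem_cn_inl.1 hy, fun h ↦ hyX (inl_mem_cnUnion.2 (Or.inl h))⟩
  · exact ⟨u, inr_mem_cn_inl.1 hy, fun h ↦ hyX (inr_mem_cnUnion.2 (Or.inl h))⟩

lemma isLegalSeq_projW {T : List ({v : V // v ≠ u} ⊕ W)} (hT : IsLegalSeq (Replace G u H) T) :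
    IsLegalSeq H (projW T) := by
  intro L w M h
  obtain ⟨X, Y, rfl, rfl⟩ := exists_eq_append_inr_of_projW_eq h
  cases hX : projW X with
  | nil => exact ⟨w, self_mem_cn w, by simp⟩
  | cons =>
    obtain ⟨y | w', hy, hyX⟩ := hT X _ Y rfl
    · exact absurd (inl_mem_cnUnion.2 (Or.inr ⟨by simp [hX], inl_mem_cn_inr.1 hy⟩)) hyX
    · exact ⟨w', inr_mem_cn_inr.1 hy, fun h ↦ hyX (inr_mem_cnUnion.2 (Or.inr (hX ▸ h)))⟩

lemma IsLegalSeq.map_inl [Nonempty W] {L : List {v : V // v ≠ u}}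
    (hL : IsLegalSeq G (L.map Subtype.val)) : IsLegalSeq (Replace G u H) (L.map Sum.inl) := by
  intro X t Y h
  obtain ⟨X', rest, rfl, rfl, h'⟩ := List.map_eq_append_iff.1 h
  obtain ⟨a, Y', rfl, rfl, rfl⟩ := List.map_eq_cons_iff.1 h'
  obtain ⟨x, hx, hxX⟩ := hL (X'.map Subtype.val) a.1 (Y'.map Subtype.val) (by simp)
  by_cases hxu : x = u
  · subst hxu
    exact ⟨Sum.inr (Classical.arbitrary W), inr_mem_cn_inl.2 hx,
      by simpa [inr_mem_cnUnion] using hxX⟩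
  · exact ⟨Sum.inl ⟨x, hxu⟩, inl_mem_cn_inl.2 hx, by simpa [inl_mem_cnUnion] using hxX⟩

lemma IsLegalSeq.replace [Nonempty W] {L R : List {v : V // v ≠ u}} {SH : List W}
    (hS : IsLegalSeq G (L.map Subtype.val ++ u :: R.map Subtype.val)) (hSH : IsLegalSeq H SH)
    (hu : u ∉ cnUnion G (L.map Subtype.val) ∨ SH.length ≤ 1) :
    IsLegalSeq (Replace G u H) (L.map Sum.inl ++ SH.map Sum.inr ++ R.map Sum.inl) := by
  refine isLegalSeq_append.2 ⟨isLegalSeq_append.2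
    ⟨(hS.sublist (List.sublist_append_left _ _)).map_inl, ?_⟩, ?_⟩
  · intro X t Y h
    obtain ⟨X', rest, rfl, rfl, h'⟩ := List.map_eq_append_iff.1 h
    obtain ⟨w, Y', rfl, rfl, rfl⟩ := List.map_eq_cons_iff.1 h'
    cases X' with
    | nil =>
      obtain ⟨x, hx, hxL⟩ := hS _ u _ rfl
      by_cases hxu : x = u
      · subst hxu
        exact ⟨Sum.inr w, self_mem_cn _, by simpa [inr_mem_cnUnion] using hxL⟩
      · exact ⟨Sum.inl ⟨x, hxu⟩, inl_mem_cn_inr.2 hx, by simpa [inl_mem_cnUnion] using hxL⟩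
    | cons w₀ X' =>
      have hu : u ∉ cnUnion G (L.map Subtype.val) := hu.resolve_right (by simp)
      obtain ⟨w', hw', hw'X⟩ := hSH (w₀ :: X') w Y' rfl
      exact ⟨Sum.inr w', inr_mem_cn_inr.2 hw', by simp_all [inr_mem_cnUnion]⟩
  · intro X t Y h
    obtain ⟨X', rest, rfl, rfl, h'⟩ := List.map_eq_append_iff.1 h
    obtain ⟨a, Y', rfl, rfl, rfl⟩ := List.map_eq_cons_iff.1 h'
    obtain ⟨x, hx, hxX⟩ :=
      hS (L.map Subtype.val ++ u :: X'.map Subtype.val) a.1 (Y'.map Subtype.val) (by simp)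
    have hxu : x ≠ u := by rintro rfl; simp [self_mem_cn] at hxX
    exact ⟨Sum.inl ⟨x, hxu⟩, inl_mem_cn_inl.2 hx, by simp_all [inl_mem_cnUnion]⟩

end Replace

section Lower

variable {V W : Type*} [Finite V] [Finite W] [Nonempty W] {G : SimpleGraph V} {u : V}
  {H : SimpleGraph W}

lemma gammaGr_le_gammaGr_replace : gammaGr G ≤ gammaGr (Replace G u H) := by
  obtain ⟨S, hS, hlen⟩ := exists_isLegal_length_eq_gammaGr (G := G)
  rw [← hlen]
  have hS := (isLegal_iff.1 hS).1
  by_cases huS : u ∈ S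
  · obtain ⟨L, R, rfl⟩ := List.append_of_mem huS
    obtain ⟨L, R, rfl, rfl⟩ := exists_map_val_eq_of_nodup hS.nodup
    obtain ⟨w⟩ := ‹Nonempty W›
    simpa using (hS.replace (isLegalSeq_singleton (G := H) w) (Or.inr le_rfl)).length_le_gammaGr
  · lift S to List {v : V // v ≠ u} using fun v hv hvu ↦ huS (hvu ▸ hv)
    simpa using (hS.map_inl (H := H)).length_le_gammaGr

lemma gammaGrVert_add_gammaGr_le : gammaGrVert G u + gammaGr H ≤ gammaGr (Replace G u H) + 1 := by
  obtain ⟨S, hS, huS, hlen⟩ := exists_isLegal_gammaGrVert_le (G := G) u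
  obtain ⟨L, R, rfl, huL⟩ := mem_selfFoot_iff.1 huS
  have hS := (isLegal_iff.1 hS).1
  obtain ⟨L, R, rfl, rfl⟩ := exists_map_val_eq_of_nodup hS.nodup
  obtain ⟨SH, hSH, hSHlen⟩ := exists_isLegal_length_eq_gammaGr (G := H)
  have := (hS.replace (isLegal_iff.1 hSH).1 (Or.inl huL)).length_le_gammaGr
  simp at this hlen
  omega

end Lower

section Upper

variable {V W : Type*} {G : SimpleGraph V} {u : V} {H : SimpleGraph W}

variable (G u H) in
def HasPrivateInlNbr (X : List ({v : V // v ≠ u} ⊕ W)) (c : {v : V // v ≠ u}) : Prop :=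
  ∃ x, Sum.inl x ∈ cn (Replace G u H) (Sum.inl c) \ cnUnion (Replace G u H) X

lemma projW_eq_nil_of_isLegalSeq_append {X Y : List ({v : V // v ≠ u} ⊕ W)}
    (hT : IsLegalSeq (Replace G u H) (X ++ Y)) (hX : projW X ≠ [])
    (hu : u ∈ cnUnion G (projV X)) : projW Y = [] := by
  cases hY : projW Y with
  | nil => rfl
  | cons w _ =>
    obtain ⟨Y₁, Y₂, rfl, -⟩ := exists_eq_append_inr_of_projW_eq (L := []) (by simpa using hY)
    exfalso
    obtain ⟨y | w', hy, hyX⟩ := hT (X ++ Y₁) (Sum.inr w) Y₂ (by simp)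
    · exact hyX (inl_mem_cnUnion.2 (Or.inr ⟨by simp [hX], inl_mem_cn_inr.1 hy⟩))
    · exact hyX (inr_mem_cnUnion.2 (Or.inl (by simp [hu])))

lemma hasPrivateInlNbr_of_mem_cnUnion {X Y : List ({v : V // v ≠ u} ⊕ W)}
    {c : {v : V // v ≠ u}} (hT : IsLegalSeq (Replace G u H) (X ++ Sum.inl c :: Y))
    (hu : u ∈ cnUnion G (projV X)) : HasPrivateInlNbr G u H X c := by
  obtain ⟨y | w, hy, hyX⟩ := hT X _ Y rfl
  · exact ⟨y, hy, hyX⟩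
  · exact absurd (inr_mem_cnUnion.2 (Or.inl hu)) hyX

lemma mem_cn_and_exists_not_mem_cnUnion {X Y : List ({v : V // v ≠ u} ⊕ W)}
    {c : {v : V // v ≠ u}} (hT : IsLegalSeq (Replace G u H) (X ++ Sum.inl c :: Y))
    (hc : ¬HasPrivateInlNbr G u H X c) :
    u ∈ cn G c.1 ∧ ∃ w, w ∉ cnUnion H (projW X) := by
  obtain ⟨y | w, hy, hyX⟩ := hT X _ Y rfl
  · exact absurd ⟨y, hy, hyX⟩ hc
  · exact ⟨inr_mem_cn_inl.1 hy, w, fun h ↦ hyX (inr_mem_cnUnion.2 (Or.inr h))⟩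

/- A vertex of `G - u` without such a private neighbour is adjacent to `u`, so it dominates the
whole copy of `H`: there is at most one of them in a legal sequence. -/
lemma hasPrivateInlNbr_of_not_hasPrivateInlNbr {T X Y X₀ Y₀ : List ({v : V // v ≠ u} ⊕ W)}
    {b c : {v : V // v ≠ u}} (hT : IsLegalSeq (Replace G u H) T) (hTb : T = X ++ Sum.inl b :: Y)
    (hb : ¬HasPrivateInlNbr G u H X b) (hTc : T = X₀ ++ Sum.inl c :: Y₀) (hcb : c ≠ b) :
    HasPrivateInlNbr G u H X₀ c := by
  have hbu := (mem_cn_and_exists_not_mem_cnUnion (hTb ▸ hT) hb).1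
  rcases mem_or_mem_of_append_cons_eq (hTb.symm.trans hTc) (by simpa using hcb.symm) with hbX₀ | hcX
  · exact hasPrivateInlNbr_of_mem_cnUnion (hTc ▸ hT)
      (mem_cnUnion.2 ⟨b, val_mem_projV hbX₀, hbu⟩)
  · by_contra hc
    exact hb (hasPrivateInlNbr_of_mem_cnUnion (hTb ▸ hT) (mem_cnUnion.2
      ⟨c, val_mem_projV hcX, (mem_cn_and_exists_not_mem_cnUnion (hTc ▸ hT) hc).1⟩))

lemma isLegalSeq_projV_append_cons {P Q Q' : List ({v : V // v ≠ u} ⊕ W)} {w₁ : W}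
    (hT : IsLegalSeq (Replace G u H) (P ++ Sum.inr w₁ :: Q)) (hQ' : Q'.Sublist Q)
    (hQ : ∀ X c Y, Q = X ++ Sum.inl c :: Y → Sum.inl c ∈ Q' →
      HasPrivateInlNbr G u H (P ++ Sum.inr w₁ :: X) c) :
    IsLegalSeq G (projV P ++ u :: projV Q') := by
  refine isLegalSeq_append.2 ⟨(isLegalSeq_projV hT).sublist (by simp), ?_⟩
  rintro (_ | ⟨_, L⟩) v M h
  · -- `u` takes over the private neighbour of `w₁`
    obtain ⟨rfl, -⟩ := List.cons_eq_cons.1 h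
    obtain ⟨y | w, hy, hyP⟩ := hT P _ Q rfl
    · exact ⟨y, inl_mem_cn_inr.1 hy, by simpa using fun h ↦ hyP (inl_mem_cnUnion.2 (Or.inl h))⟩
    · exact ⟨u, self_mem_cn u, by simpa using fun h ↦ hyP (inr_mem_cnUnion.2 (Or.inl h))⟩
  · obtain ⟨rfl, hL⟩ := List.cons_eq_cons.1 h
    obtain ⟨X', a, Y', rfl, rfl, rfl⟩ := exists_eq_append_inl_of_projV_eq hL
    obtain ⟨X, Y, rfl, hX'⟩ := exists_append_cons_of_sublist hQ'
    obtain ⟨x, hx, hxX⟩ := hQ X a Y rfl (by simp)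
    have hX'X := cnUnion_mono (G := G) (projV_sublist_projV hX').subset
    have hxPX : x.1 ∉ cnUnion G (projV P ++ projV X) :=
      fun h ↦ hxX (inl_mem_cnUnion.2 (Or.inl (by simpa using h)))
    have hxu : x.1 ∉ cn G u := fun h ↦ hxX (inl_mem_cnUnion.2 (Or.inr ⟨by simp, h⟩))
    refine ⟨x, inl_mem_cn_inl.1 hx, ?_⟩
    simp only [cnUnion_append, cnUnion_cons, Set.mem_union, not_or] at hxPX ⊢
    exact ⟨hxPX.1, hxu, fun h ↦ hxPX.2 (hX'X h)⟩

variable [Finite V]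

lemma length_le_gammaGr_of_mem_cnUnion {P Q : List ({v : V // v ≠ u} ⊕ W)} {w₁ : W}
    (hT : IsLegalSeq (Replace G u H) (P ++ Sum.inr w₁ :: Q)) (hP : projW P = [])
    (hu : u ∈ cnUnion G (projV P)) : (P ++ Sum.inr w₁ :: Q).length ≤ gammaGr G := by
  have hQ : projW Q = [] := projW_eq_nil_of_isLegalSeq_append (X := P ++ [Sum.inr w₁])
    (by simpa using hT) (by simp) (by simpa using hu)
  have hG := isLegalSeq_projV_append_cons hT (List.Sublist.refl Q) fun X c Y hQX _ ↦
    hasPrivateInlNbr_of_mem_cnUnion (Y := Y) (by simpa [hQX] using hT) (by simp [hu])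
  have := hG.length_le_gammaGr
  have := length_projV_add_length_projW (P ++ Sum.inr w₁ :: Q)
  simp_all
  omega

variable [Finite W]

lemma length_add_one_le_of_not_hasPrivateInlNbr {P X Y : List ({v : V // v ≠ u} ⊕ W)}
    {w₁ : W} {b : {v : V // v ≠ u}}
    (hT : IsLegalSeq (Replace G u H) (P ++ Sum.inr w₁ :: (X ++ Sum.inl b :: Y)))
    (hu : u ∉ cnUnion G (projV P))
    (hb : ¬HasPrivateInlNbr G u H (P ++ Sum.inr w₁ :: X) b) :
    (P ++ Sum.inr w₁ :: (X ++ Sum.inl b :: Y)).length + 1 ≤ gammaGrVert G u + gammaGr H := by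
  have hT' : IsLegalSeq (Replace G u H) ((P ++ Sum.inr w₁ :: X) ++ Sum.inl b :: Y) := by
    simpa using hT
  obtain ⟨hbu, w', hw'⟩ := mem_cn_and_exists_not_mem_cnUnion hT' hb
  have hY : projW Y = [] := projW_eq_nil_of_isLegalSeq_append
    (X := P ++ Sum.inr w₁ :: X ++ [Sum.inl b]) (by simpa using hT) (by simp)
    (mem_cnUnion.2 ⟨b, val_mem_projV (by simp), hbu⟩)
  have hH := ((isLegalSeq_projW (hT'.sublist (List.sublist_append_left _ _))).append_singleton
    hw').length_le_gammaGr
  have hbXY : Sum.inl b ∉ X ++ Y := (List.nodup_cons.1 (List.nodup_middle.1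
    (List.nodup_append.1 hT.nodup).2.1.of_cons)).1
  have hG := (isLegalSeq_projV_append_cons hT (Q' := X ++ Y)
    ((List.Sublist.refl X).append (List.sublist_cons_self _ _))
    fun X₀ c Y₀ hsplit hc ↦ hasPrivateInlNbr_of_not_hasPrivateInlNbr hT
      (X := P ++ Sum.inr w₁ :: X) (Y := Y) (by simp) hb (X₀ := P ++ Sum.inr w₁ :: X₀) (Y₀ := Y₀)
      (by simp [← hsplit]) (by rintro rfl; exact hbXY hc)).length_le_gammaGrVert hu
  have := length_projV_add_length_projW (P ++ Sum.inr w₁ :: (X ++ Sum.inl b :: Y))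
  simp_all
  omega

lemma IsLegalSeq.length_le_gammaGr_or_gammaGrVert_add_gammaGr {T : List ({v : V // v ≠ u} ⊕ W)}
    (hT : IsLegalSeq (Replace G u H) T) :
    T.length ≤ gammaGr G ∨ T.length + 1 ≤ gammaGrVert G u + gammaGr H := by
  cases hW : projW T with
  | nil =>
    have := length_projV_add_length_projW T
    have := (isLegalSeq_projV hT).length_le_gammaGr
    simp only [hW, List.length_nil] at *
    omega
  | cons w₁ _ =>
    obtain ⟨P, Q, rfl, hP⟩ := exists_eq_append_inr_of_projW_eq (L := []) (by simpa using hW)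
    by_cases hu : u ∈ cnUnion G (projV P)
    · exact Or.inl (length_le_gammaGr_of_mem_cnUnion hT hP hu)
    refine Or.inr ?_
    by_cases hQ : ∀ X c Y, Q = X ++ Sum.inl c :: Y →
      HasPrivateInlNbr G u H (P ++ Sum.inr w₁ :: X) c
    · have hG := (isLegalSeq_projV_append_cons hT (List.Sublist.refl Q)
        fun X c Y h _ ↦ hQ X c Y h).length_le_gammaGrVert hu
      have hH := (isLegalSeq_projW hT).length_le_gammaGr
      have := length_projV_add_length_projW (P ++ Sum.inr w₁ :: Q)
      simp_all
      omega
    · simp only [not_forall] at hQ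
      obtain ⟨X, b, Y, rfl, hb⟩ := hQ
      exact length_add_one_le_of_not_hasPrivateInlNbr hT hu hb

end Upper

end GrundyDom

theorem stmt4_general {V W : Type*} [Fintype V] [Fintype W] [Nonempty W]
    (G : SimpleGraph V) (u : V) (H : SimpleGraph W) :
    (gammaGr (Replace G u H) : ℤ) =
      max (gammaGr G : ℤ) ((gammaGrVert G u : ℤ) + (gammaGr H : ℤ) - 1) := by
  have h₁ := gammaGr_le_gammaGr_replace (G := G) (u := u) (H := H)
  have h₂ := gammaGrVert_add_gammaGr_le (G := G) (u := u) (H := H)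
  obtain ⟨T, hT, hlen⟩ := exists_isLegal_length_eq_gammaGr (G := Replace G u H)
  have h₃ := (isLegal_iff.1 hT).1.length_le_gammaGr_or_gammaGrVert_add_gammaGr
  rw [hlen] at h₃
  omega

/-- `γ_gr(G_{u ↩ H}) = max { γ_gr(G), γ_gr^u(G) + γ_gr(H) - 1 }`. -/
theorem stmt4 {V W : Type*} [Fintype V] [DecidableEq V] [Fintype W] [Nonempty W]
    (G : SimpleGraph V) (u : V) (H : SimpleGraph W) :
    (gammaGr (Replace G u H) : ℤ) =
      max (gammaGr G : ℤ) ((gammaGrVert G u : ℤ) + (gammaGr H : ℤ) - 1) :=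
  stmt4_general G u H
end

section
/- For n ≥ m+2, the Grundy domination number of the m-th power of the n-path satisfies γ_gr(P_n^m) = n − m. -/
/-!
Footprinters of a legal sequence are pairwise distinct, and those of `v₂, v₃, …` lie outside
`N[v₁]`; hence a legal sequence in a graph on `N` vertices has length at most `N + 1 - |N[v₁]|`.
In `P_n^m` every closed neighbourhood has at least `m + 1` vertices, which gives `γ_gr ≤ n - m`.
Conversely `(1, 2, …, n - m)` is legal: vertex `i` footprints `i + m`.
-/

namespace GrundyDom

section Footprint

variable {V : Type*} {G : SimpleGraph V}

lemma notMem_cn_of_mem_PN {S : List V} {i j : ℕ} {v x : V} (hx : x ∈ PN G S j v) (hij : i < j)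
    (hi : i < S.length) : x ∉ cn G S[i] := by
  intro hxi
  have hmem : S[i] ∈ S.take j := by
    have h := List.getElem_mem (l := S.take j) (n := i) (by rw [List.length_take]; omega)
    rwa [List.getElem_take] at h
  exact hx.2 (Set.mem_biUnion hmem hxi)

lemma injective_of_mem_PN {S : List V} {w : Fin S.length → V}
    (hw : ∀ i : Fin S.length, w i ∈ PN G S i (S.get i)) : Function.Injective w := by
  intro i j hij
  by_contra hne
  wlog hlt : i < j generalizing i j
  · exact this hij.symm (Ne.symm hne) (lt_of_le_of_ne (not_lt.1 hlt) (Ne.symm hne))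
  exact notMem_cn_of_mem_PN (hw j) hlt i.isLt (hij ▸ (hw i).1)

lemma IsLegal.length_add_card_cn_le [Finite V] {v : V} {T : List V} (h : IsLegal G (v :: T)) :
    T.length + Nat.card (cn G v) ≤ Nat.card V := by
  choose w hw using h.legal
  have houtside : ∀ (x : cn G v) (i : Fin T.length), (x : V) ≠ w i.succ := fun x i hx =>
    notMem_cn_of_mem_PN (hw i.succ) i.succ_pos (Nat.succ_pos _) (hx ▸ x.2)
  have hinj := Subtype.val_injective.sumElim
    ((injective_of_mem_PN hw).comp (Fin.succ_injective _)) houtside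
  simpa only [Nat.card_sum, Nat.card_eq_fintype_card, Fintype.card_fin, add_comm]
    using Nat.card_le_card_of_injective _ hinj

end Footprint

section PathPower

variable {n m : ℕ}

lemma mem_cn_pathPow {u v : Fin n} : v ∈ cn (pathPow n m) u ↔ Nat.dist u v ≤ m := by
  simp only [cn, pathPow, SimpleGraph.mem_neighborSet, Set.mem_insert_iff]
  rcases eq_or_ne v u with rfl | hne
  · simp
  · exact ⟨fun h => (h.resolve_left hne).2, fun h => Or.inr ⟨hne.symm, h⟩⟩

lemma card_cn_pathPow (hmn : m < n) (v : Fin n) : m + 1 ≤ Nat.card (cn (pathPow n m) v) := by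
  let window : Fin (m + 1) → cn (pathPow n m) v := fun j =>
    ⟨⟨(v : ℕ) - min (v : ℕ) m + j, by omega⟩, mem_cn_pathPow.2 (by simp only [Nat.dist]; omega)⟩
  have hinj : Function.Injective window := fun i j h => by
    simpa [window, Fin.ext_iff] using congrArg (fun x : cn (pathPow n m) v => (x : ℕ)) h
  simpa using Nat.card_le_card_of_injective window hinj

lemma IsLegal.length_le_pathPow (hmn : m < n) {S : List (Fin n)} (h : IsLegal (pathPow n m) S) :
    S.length ≤ n - m := by
  cases S with
  | nil => simp
  | cons v T =>
    have hbound := h.length_add_card_cn_le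
    have hcard := card_cn_pathPow hmn v
    simp only [Nat.card_eq_fintype_card, Fintype.card_fin] at hbound hcard ⊢
    simp only [List.length_cons]
    omega

lemma isLegal_pathPow_ofFn_castLE (hmn : m < n) :
    IsLegal (pathPow n m) (List.ofFn (Fin.castLE (Nat.sub_le n m))) where
  nodup := List.nodup_ofFn.2 (Fin.castLE_injective _)
  dominates v := ⟨⟨min v (n - m - 1), by omega⟩, List.mem_ofFn.2 ⟨⟨_, by omega⟩, rfl⟩,
    mem_cn_pathPow.2 (by simp only [Nat.dist]; omega)⟩
  legal i := by
    have hi : (i : ℕ) < n - m := by simpa using i.isLt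
    refine ⟨⟨i + m, by omega⟩, mem_cn_pathPow.2 (by simp [Nat.dist]), ?_⟩
    intro hx
    obtain ⟨_, htake, hmem⟩ := Set.mem_iUnion₂.1 hx
    obtain ⟨j, hj, rfl⟩ := List.mem_iff_getElem.1 htake
    simp only [List.length_take, List.length_ofFn] at hj
    simp only [List.getElem_take, List.getElem_ofFn, mem_cn_pathPow, Fin.val_castLE,
      Nat.dist] at hmem
    omega

end PathPower

end GrundyDom

open GrundyDom Finset

theorem stmt15_general (n m : ℕ) (hn : m + 2 ≤ n) :
    (gammaGr (pathPow n m) : ℤ) = (n : ℤ) - m := by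
  have hmn : m < n := by omega
  have hgreatest :
      IsGreatest {k | ∃ S : List (Fin n), IsLegal (pathPow n m) S ∧ S.length = k} (n - m) :=
    ⟨⟨_, isLegal_pathPow_ofFn_castLE hmn, by simp⟩,
      fun _ ⟨_, hS, hk⟩ => hk ▸ hS.length_le_pathPow hmn⟩
  rw [gammaGr, hgreatest.csSup_eq]
  omega

/-- `γ_gr(P_n^m) = n - m` for `n ≥ m+2`. -/
theorem stmt15 (n m : ℕ) (hm : 1 ≤ m) (hn : m + 2 ≤ n) :
    (gammaGr (pathPow n m) : ℤ) = (n : ℤ) - m :=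
  stmt15_general n m hn
end

section
/- The Grundy domination number of a graph G equals the maximum over all independent sets I of G of γ_gr(G, I), i.e. γ_gr(G) = max{γ_gr(G, I) : I independent set of G}. -/
open GrundyDom Finset

/-! A vertex that footprints itself at step `j` of a legal sequence is outside the closed
neighbourhoods of all earlier vertices, so `I_S` is independent for every legal `S`. Hence a
longest legal sequence `S` witnesses `γ_gr(G) ≤ γ_gr(G, I_S)`, while `γ_gr(G, I) ≤ γ_gr(G)`
holds because it is a supremum over fewer sequences. -/

namespace GrundyDom

variable {V : Type*} {G : SimpleGraph V}

lemma IsLegal.length_le_card [Fintype V] {S : List V} (hS : IsLegal G S) :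
    S.length ≤ Fintype.card V :=
  hS.nodup.length_le_card

lemma bddAbove_legal_lengths [Fintype V] (G : SimpleGraph V) :
    BddAbove {k | ∃ S : List V, IsLegal G S ∧ S.length = k} :=
  ⟨Fintype.card V, by rintro k ⟨S, hS, rfl⟩; exact hS.length_le_card⟩

lemma bddAbove_legal_lengths_selfFoot [Fintype V] (G : SimpleGraph V) (I : Set V) :
    BddAbove {k | ∃ S : List V, IsLegal G S ∧ selfFoot G S = I ∧ S.length = k} :=
  ⟨Fintype.card V, by rintro k ⟨S, hS, -, rfl⟩; exact hS.length_le_card⟩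

lemma gammaGrOn_le_gammaGr [Fintype V] (G : SimpleGraph V) (I : Set V) :
    gammaGrOn G I ≤ gammaGr G :=
  csSup_le_csSup' (bddAbove_legal_lengths G) fun _ ⟨S, hS, _, hlen⟩ => ⟨S, hS, hlen⟩

lemma IsLegal.length_le_gammaGrOn_selfFoot [Fintype V] {S : List V} (hS : IsLegal G S) :
    S.length ≤ gammaGrOn G (selfFoot G S) :=
  le_csSup (bddAbove_legal_lengths_selfFoot G _) ⟨S, hS, rfl, rfl⟩

lemma not_adj_of_mem_PN {S : List V} {i : Fin S.length} {j : ℕ} (hij : i.val < j) {w v : V}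
    (hv : v ∈ PN G S j w) : ¬ G.Adj (S.get i) v := fun hadj =>
  hv.2 <| Set.mem_biUnion (List.mem_take_iff_getElem.mpr ⟨i, lt_min hij i.isLt, rfl⟩)
    (Set.mem_insert_of_mem _ hadj)

end GrundyDom

theorem stmt19_general {V : Type*} [Fintype V] (G : SimpleGraph V) :
    IsGreatest {k : ℕ | ∃ I : Finset V, IsIndep G ↑I ∧ k = gammaGrOn G ↑I}
      (gammaGr G) := by
  refine ⟨?_, fun _ ⟨I, _, hk⟩ => hk ▸ gammaGrOn_le_gammaGr G I⟩
  rcases Set.eq_empty_or_nonempty {k | ∃ S : List V, IsLegal G S ∧ S.length = k} with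
    hnone | hsome
  · -- impossible for finite `G`, but harmless since `sSup ∅ = 0`
    have hzero : gammaGr G = 0 := by rw [gammaGr, hnone, csSup_empty]; rfl
    refine ⟨∅, fun _ h => absurd h (Finset.notMem_empty _), ?_⟩
    rw [hzero]
    exact (Nat.le_zero.mp (hzero ▸ gammaGrOn_le_gammaGr G _)).symm
  · obtain ⟨S, hS, hlen⟩ := Nat.sSup_mem hsome (bddAbove_legal_lengths G)
    refine ⟨(Set.toFinite (selfFoot G S)).toFinset, ?_, ?_⟩
    · rw [Set.Finite.coe_toFinset]
      exact isIndep_selfFoot S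
    · rw [Set.Finite.coe_toFinset]
      exact le_antisymm (hlen.symm.trans_le hS.length_le_gammaGrOn_selfFoot)
        (gammaGrOn_le_gammaGr G _)

/-- `γ_gr(G) = max { γ_gr(G, I) : I independent set of G }`. -/
theorem stmt19 {V : Type*} [Fintype V] [DecidableEq V] (G : SimpleGraph V) :
    IsGreatest {k : ℕ | ∃ I : Finset V, IsIndep G ↑I ∧ k = gammaGrOn G ↑I}
      (gammaGr G) :=
  stmt19_general G
end
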